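/- Let F(u) = ∫₀^{u} exp(t²) dt, f(u) = 1 − 2·u·exp(−u²)·F(u), let u₀ be the unique zero of f in (0, ∞), fix q > 0, define h(y) = ∫₀^{y} f(q·η) dη, ĉ₁,crit = (1/q)·∫₀^{u₀} f(u) du, ȳ(ĉ₁) the unique y ∈ (0, u₀/q) with h(y) = ĉ₁, and Ā(ĉ₁) = ∫₀^{ȳ(ĉ₁)} y·h(y)/√(ĉ₁² − h(y)²) dy. Then Ā(ĉ₁) → +∞ as ĉ₁ → ĉ₁,crit⁻, and consequently ĉ₁/Ā(ĉ₁) → 0 as ĉ₁ → ĉ₁,crit⁻. -/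

import Mathlib

open Real MeasureTheory intervalIntegral Set Filter Topology

/-- `F(u) = ∫₀^u exp(t²) dt`. -/
noncomputable def Ferf (u : ℝ) : ℝ := ∫ t in (0:ℝ)..u, Real.exp (t ^ 2)

/-- `f(u) = 1 - 2 u exp(-u²) F(u)`, the rescaled curvature function. -/
noncomputable def fker (u : ℝ) : ℝ := 1 - 2 * u * Real.exp (-(u ^ 2)) * Ferf u

/-!
Write `Y = u₀ / q`. Since `f` is `C¹` and `f(u₀) = 0`, the derivative `h' = f(q ·)` is at
most `Λ (Y - y)` on `[0, Y]`, so `h(Y) - h(y) ≤ Λ (Y - y)²` and `√(c² - h(y)²) ≤ K (Y - y)`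
for every `c ≤ ĉ₁,crit`, with `K` independent of `c`. On `[Y/2, ȳ(c)]` the numerator `y h(y)`
is bounded below, so `Ā(c) ≥ κ log ((Y/2) / (Y - ȳ(c)))`, which diverges because `ȳ(c) → Y`
as `c → ĉ₁,crit⁻`. For fixed `c < ĉ₁,crit` the integrand is integrable: `h' ≥ μ > 0` on
`[0, ȳ(c)]` makes its singularity at `ȳ(c)` of order `(ȳ(c) - y)^(-1/2)`.
-/

theorem hasDerivAt_Ferf (u : ℝ) : HasDerivAt Ferf (exp (u ^ 2)) u :=
  ((by fun_prop : Continuous fun t : ℝ => exp (t ^ 2)).integral_hasStrictDerivAt 0 u).hasDerivAt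

theorem contDiff_Ferf : ContDiff ℝ 1 Ferf := by
  rw [contDiff_one_iff_deriv, funext fun u => (hasDerivAt_Ferf u).deriv]
  exact ⟨fun u => (hasDerivAt_Ferf u).differentiableAt, by fun_prop⟩

theorem contDiff_fker : ContDiff ℝ 1 fker := by
  have := contDiff_Ferf
  unfold fker
  fun_prop

theorem fker_zero : fker 0 = 1 := by simp [fker]

theorem fker_pos_of_mem_Ico {u₀ : ℝ} (huniq : ∀ u : ℝ, 0 < u → fker u = 0 → u = u₀)
    {u : ℝ} (hu : u ∈ Ico 0 u₀) : 0 < fker u := by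
  by_contra! hneg
  obtain ⟨z, hz, hfz⟩ := intermediate_value_Ioc' hu.1 contDiff_fker.continuous.continuousOn
    ⟨hneg, by rw [fker_zero]; exact one_pos⟩
  exact (hz.2.trans_lt hu.2).ne (huniq z hz.1 hfz)

theorem exists_fker_le_mul_sub {u₀ : ℝ} (hfu₀ : fker u₀ = 0) (hu₀ : 0 ≤ u₀) :
    ∃ L : ℝ, ∀ u ∈ Icc 0 u₀, fker u ≤ L * (u₀ - u) := by
  obtain ⟨L, hL⟩ :=
    contDiff_fker.contDiffOn.exists_lipschitzOnWith one_ne_zero (convex_Icc 0 u₀) isCompact_Icc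
  refine ⟨L, fun u hu => ?_⟩
  have := hL.dist_le_mul u hu u₀ ⟨hu₀, le_rfl⟩
  rw [hfu₀, Real.dist_eq, Real.dist_eq, sub_zero, abs_sub_comm u,
    abs_of_nonneg (sub_nonneg.2 hu.2)] at this
  exact (le_abs_self _).trans this

section Primitive

variable {φ H : ℝ → ℝ}

theorem strictMonoOn_Icc_of_hasDerivAt_pos (hH : ∀ y, HasDerivAt H (φ y) y) {a b : ℝ}
    (hpos : ∀ y ∈ Ioo a b, 0 < φ y) : StrictMonoOn H (Icc a b) :=
  strictMonoOn_of_deriv_pos (convex_Icc a b)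
    (Differentiable.continuous fun y => (hH y).differentiableAt).continuousOn fun y hy => by
      rw [interior_Icc] at hy
      exact (hH y).deriv ▸ hpos y hy

theorem mul_sub_le_sub_of_le_hasDerivAt (hH : ∀ y, HasDerivAt H (φ y) y) {a b μ : ℝ}
    (hμ : ∀ y ∈ Icc a b, μ ≤ φ y) {y : ℝ} (hy : y ∈ Icc a b) :
    μ * (b - y) ≤ H b - H y :=
  (convex_Icc a b).mul_sub_le_image_sub_of_le_deriv
    (Differentiable.continuous fun y => (hH y).differentiableAt).continuousOn
    (fun x _ => (hH x).differentiableAt.differentiableWithinAt)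
    (fun x hx => (hH x).deriv ▸ hμ x (interior_subset hx)) y hy b
    (right_mem_Icc.2 (hy.1.trans hy.2)) hy.2

theorem sub_le_mul_sq_of_hasDerivAt_le_mul_sub (hH : ∀ y, HasDerivAt H (φ y) y) {y Y Λ : ℝ}
    (hΛ : 0 ≤ Λ) (hle : ∀ η ∈ Icc y Y, φ η ≤ Λ * (Y - η)) (hy : y ≤ Y) :
    H Y - H y ≤ Λ * (Y - y) ^ 2 := by
  have := (convex_Icc y Y).image_sub_le_mul_sub_of_deriv_le
    (Differentiable.continuous fun y => (hH y).differentiableAt).continuousOn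
    (fun x _ => (hH x).differentiableAt.differentiableWithinAt) (C := Λ * (Y - y))
    (fun x hx => by
      rw [interior_Icc] at hx
      rw [(hH x).deriv]
      exact (hle x (Ioo_subset_Icc_self hx)).trans
        (mul_le_mul_of_nonneg_left (by linarith [hx.1]) hΛ))
    y (left_mem_Icc.2 hy) Y (right_mem_Icc.2 hy) hy
  linarith

theorem StrictMonoOn.tendsto_rightInverse_nhdsLT {B : ℝ → ℝ} {a Y : ℝ}
    (hmono : StrictMonoOn H (Icc a Y)) (haY : a < Y)
    (hB : ∀ c ∈ Ioo (H a) (H Y), B c ∈ Ioo a Y ∧ H (B c) = c) :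
    Tendsto B (𝓝[<] (H Y)) (𝓝[<] Y) := by
  have hev : ∀ᶠ c in 𝓝[<] H Y, c ∈ Ioo (H a) (H Y) :=
    Ioo_mem_nhdsLT (hmono (left_mem_Icc.2 haY.le) (right_mem_Icc.2 haY.le) haY)
  refine tendsto_nhdsWithin_iff.2 ⟨tendsto_order.2 ⟨fun b hb => ?_, fun b hb => ?_⟩,
    hev.mono fun c hc => (hB c hc).1.2⟩
  · have hb' : max a b ∈ Icc a Y := ⟨le_max_left a b, max_le haY.le hb.le⟩
    filter_upwards [Ioo_mem_nhdsLT (hmono hb' (right_mem_Icc.2 haY.le) (max_lt haY hb)), hev]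
      with c hc hc'
    obtain ⟨hBc, hHB⟩ := hB c hc'
    by_contra! hle
    have := hmono.monotoneOn (Ioo_subset_Icc_self hBc) hb' (hle.trans (le_max_right a b))
    linarith [hc.1]
  · exact hev.mono fun c hc => (hB c hc).1.2.trans hb

noncomputable def areaDensity (H : ℝ → ℝ) (c y : ℝ) : ℝ := y * H y / √(c ^ 2 - H y ^ 2)

theorem intervalIntegrable_areaDensity (hφ : Continuous φ) (hH : ∀ y, HasDerivAt H (φ y) y)
    (hH0 : H 0 = 0) {B c : ℝ} (hB : 0 < B) (hpos : ∀ y ∈ Icc 0 B, 0 < φ y) (hc : H B = c) :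
    IntervalIntegrable (areaDensity H c) volume 0 B := by
  obtain ⟨z, hz, hzmin⟩ := isCompact_Icc.exists_isMinOn (nonempty_Icc.2 hB.le) hφ.continuousOn
  have hμ : 0 < φ z := hpos z hz
  have hgap : ∀ y ∈ Icc 0 B, φ z * (B - y) ≤ c - H y := fun y hy =>
    hc ▸ mul_sub_le_sub_of_le_hasDerivAt hH (fun x hx => hzmin hx) hy
  have hmono : MonotoneOn H (Icc 0 B) :=
    (strictMonoOn_Icc_of_hasDerivAt_pos hH fun y hy =>
      hpos y (Ioo_subset_Icc_self hy)).monotoneOn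
  have hHy : ∀ y ∈ Icc 0 B, 0 ≤ H y ∧ H y ≤ c := fun y hy =>
    ⟨hH0 ▸ hmono (left_mem_Icc.2 hB.le) hy hy.1, hc ▸ hmono hy (right_mem_Icc.2 hB.le) hy.2⟩
  have hc0 : 0 < c := by nlinarith [hgap 0 (left_mem_Icc.2 hB.le)]
  have hHc : Continuous H := Differentiable.continuous fun y => (hH y).differentiableAt
  have hsing : IntervalIntegrable (fun y => (B - y) ^ (-(1 / 2) : ℝ)) volume 0 B := by
    simpa using ((intervalIntegrable_rpow' (a := 0) (b := B) (r := -(1 / 2))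
      (by norm_num)).comp_sub_left B).symm
  refine (hsing.const_mul (B * c / √(φ z * c))).mono_fun
    (Measurable.aestronglyMeasurable (by unfold areaDensity; fun_prop)) ?_
  rw [EventuallyLE, ae_restrict_iff' measurableSet_uIoc]
  refine .of_forall fun y hy => ?_
  rw [uIoc_of_le hB.le] at hy
  have hy' := Ioc_subset_Icc_self hy
  obtain ⟨hHy0, hHyc⟩ := hHy y hy'
  have hdens : 0 ≤ areaDensity H c y := div_nonneg (mul_nonneg hy'.1 hHy0) (sqrt_nonneg _)
  rw [norm_of_nonneg hdens,
    norm_of_nonneg (mul_nonneg (by positivity) (rpow_nonneg (by linarith [hy.2]) _))]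
  rcases hy.2.eq_or_lt with rfl | hyB
  · -- division by `√0 = 0` makes the density vanish at `y = B`
    simp [areaDensity, hc]
  · -- `c² - H y² ≥ c (c - H y) ≥ c φ(z) (B - y)`, with `φ(z) = min φ` on `[0, B]`
    have hden : φ z * c * (B - y) ≤ c ^ 2 - H y ^ 2 := by nlinarith [hgap y hy']
    have hsq : √(φ z * c) * √(B - y) ≤ √(c ^ 2 - H y ^ 2) := by
      rw [← sqrt_mul (by positivity)]
      exact sqrt_le_sqrt hden
    rw [rpow_neg (by linarith), ← sqrt_eq_rpow, ← div_eq_mul_inv, div_div]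
    exact div_le_div₀ (by positivity) (mul_le_mul hy'.2 hHyc hHy0 hB.le)
      (mul_pos (sqrt_pos.2 (by positivity)) (sqrt_pos.2 (by linarith))) hsq

theorem div_le_areaDensity {Y Λ : ℝ} (hmono : StrictMonoOn H (Icc 0 Y)) (hH0 : H 0 = 0)
    (hquad : ∀ y ∈ Icc 0 Y, H Y - H y ≤ Λ * (Y - y) ^ 2) {B y : ℝ} (hB : B ≤ Y)
    (hy : y ∈ Ioo (Y / 2) B) :
    Y / 2 * H (Y / 2) / (√(2 * H Y * Λ) * (Y - y)) ≤ areaDensity H (H B) y := by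
  have hY : 0 < Y := by linarith [hy.1, hy.2]
  have hY2 : Y / 2 ∈ Icc 0 Y := ⟨by linarith, by linarith⟩
  have hyI : y ∈ Icc 0 Y := ⟨by linarith [hy.1], by linarith [hy.2]⟩
  have hBI : B ∈ Icc 0 Y := ⟨by linarith [hy.1, hy.2], hB⟩
  have hH2 : 0 ≤ H (Y / 2) := hH0 ▸ hmono.monotoneOn (left_mem_Icc.2 hY.le) hY2 (by linarith)
  have hH2y : H (Y / 2) ≤ H y := hmono.monotoneOn hY2 hyI hy.1.le
  have hHyB : H y < H B := hmono hyI hBI hy.2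
  have hHBY : H B ≤ H Y := hmono.monotoneOn hBI (right_mem_Icc.2 hY.le) hB
  -- `H B² - H y² ≤ 2 H Y (H Y - H y) ≤ 2 H Y Λ (Y - y)²`
  have hden : H B ^ 2 - H y ^ 2 ≤ 2 * H Y * Λ * (Y - y) ^ 2 := by
    nlinarith [hquad y hyI]
  have hsqrt : √(H B ^ 2 - H y ^ 2) ≤ √(2 * H Y * Λ) * (Y - y) := by
    rw [← sqrt_sq (by linarith [hy.2] : 0 ≤ Y - y), ← sqrt_mul' _ (sq_nonneg _)]
    exact sqrt_le_sqrt hden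
  exact div_le_div₀ (by nlinarith [hy.1]) (mul_le_mul hy.1.le hH2y hH2 (by linarith [hy.1]))
    (sqrt_pos.2 (by nlinarith)) hsqrt

theorem exists_mul_log_le_integral_areaDensity {Y Λ : ℝ} (hmono : StrictMonoOn H (Icc 0 Y))
    (hH0 : H 0 = 0) (hY : 0 < Y) (hquad : ∀ y ∈ Icc 0 Y, H Y - H y ≤ Λ * (Y - y) ^ 2) :
    ∃ κ > 0, ∀ B ∈ Ico (Y / 2) Y, IntervalIntegrable (areaDensity H (H B)) volume 0 B →
      κ * log (Y / 2 / (Y - B)) ≤ ∫ y in 0..B, areaDensity H (H B) y := by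
  have hY2 : Y / 2 ∈ Icc 0 Y := ⟨by linarith, by linarith⟩
  have hH2 : 0 < H (Y / 2) := hH0 ▸ hmono (left_mem_Icc.2 hY.le) hY2 (by linarith)
  have hHY : H (Y / 2) < H Y := hmono hY2 (right_mem_Icc.2 hY.le) (by linarith)
  have hHY0 : 0 < H Y := hH2.trans hHY
  have hΛ : 0 < Λ := by nlinarith [hquad 0 (left_mem_Icc.2 hY.le)]
  refine ⟨Y / 2 * H (Y / 2) / √(2 * H Y * Λ), by positivity, fun B hB hint => ?_⟩
  have hmid : Y / 2 ∈ uIcc 0 B := by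
    rw [uIcc_of_le (by linarith [hB.1])]
    exact ⟨by linarith, hB.1⟩
  have hsplit := integral_add_adjacent_intervals
    (hint.mono_set (uIcc_subset_uIcc left_mem_uIcc hmid))
    (hint.mono_set (uIcc_subset_uIcc hmid right_mem_uIcc))
  have hnonneg : 0 ≤ ∫ y in 0..Y / 2, areaDensity H (H B) y :=
    integral_nonneg (by linarith) fun y hy => div_nonneg
      (mul_nonneg hy.1
        (hH0 ▸ hmono.monotoneOn (left_mem_Icc.2 hY.le) ⟨hy.1, by linarith [hy.2]⟩ hy.1))
      (sqrt_nonneg _)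
  have hlog : ∫ y in Y / 2..B, Y / 2 * H (Y / 2) / √(2 * H Y * Λ) * (Y - y)⁻¹
      = Y / 2 * H (Y / 2) / √(2 * H Y * Λ) * log (Y / 2 / (Y - B)) := by
    rw [intervalIntegral.integral_const_mul, integral_comp_sub_left (fun x => x⁻¹) Y,
      integral_inv_of_pos (by linarith [hB.2]) (by linarith), show Y - Y / 2 = Y / 2 by ring]
  have hcmp : ∫ y in Y / 2..B, Y / 2 * H (Y / 2) / √(2 * H Y * Λ) * (Y - y)⁻¹
      ≤ ∫ y in Y / 2..B, areaDensity H (H B) y := by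
    refine integral_mono_on_of_le_Ioo hB.1 ?_
      (hint.mono_set (uIcc_subset_uIcc hmid right_mem_uIcc)) fun y hy => ?_
    · refine (continuousOn_const.mul ((continuousOn_const.sub continuousOn_id).inv₀
        fun y hy => ?_)).intervalIntegrable
      rw [uIcc_of_le hB.1] at hy
      exact sub_ne_zero.2 (ne_of_gt (hy.2.trans_lt hB.2))
    · calc _ = Y / 2 * H (Y / 2) / (√(2 * H Y * Λ) * (Y - y)) := by
            rw [div_mul_eq_div_div, div_eq_mul_inv _ (Y - y)]
        _ ≤ _ := div_le_areaDensity hmono hH0 hquad hB.2.le hy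
  linarith

theorem tendsto_mul_log_div_sub_nhdsLT {Y κ : ℝ} (hY : 0 < Y) (hκ : 0 < κ) :
    Tendsto (fun b => κ * log (Y / 2 / (Y - b))) (𝓝[<] Y) atTop := by
  have hsub : Tendsto (fun b => Y - b) (𝓝[<] Y) (𝓝[>] 0) :=
    tendsto_nhdsWithin_iff.2
      ⟨by simpa using ((continuous_sub_left Y).tendsto Y).mono_left nhdsWithin_le_nhds,
        eventually_nhdsWithin_of_forall fun b hb => mem_Ioi.2 (sub_pos.2 hb)⟩
  simpa only [div_eq_mul_inv, Function.comp_def, Pi.inv_apply] using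
    (tendsto_log_atTop.comp
      (hsub.inv_tendsto_nhdsGT_zero.const_mul_atTop (half_pos hY))).const_mul_atTop hκ

theorem tendsto_integral_areaDensity_atTop {Y Λ : ℝ} (hφ : Continuous φ)
    (hH : ∀ y, HasDerivAt H (φ y) y) (hH0 : H 0 = 0) (hY : 0 < Y)
    (hpos : ∀ y ∈ Ico 0 Y, 0 < φ y) (hlin : ∀ y ∈ Icc 0 Y, φ y ≤ Λ * (Y - y))
    {B A : ℝ → ℝ} (hB : ∀ c ∈ Ioo 0 (H Y), B c ∈ Ioo 0 Y ∧ H (B c) = c)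
    (hA : ∀ c ∈ Ioo 0 (H Y), A c = ∫ y in 0..B c, areaDensity H c y) :
    Tendsto A (𝓝[<] (H Y)) atTop := by
  have hmono : StrictMonoOn H (Icc 0 Y) :=
    strictMonoOn_Icc_of_hasDerivAt_pos hH fun y hy => hpos y (Ioo_subset_Ico_self hy)
  have hΛ : 0 ≤ Λ := by
    nlinarith [hpos 0 (left_mem_Ico.2 hY), hlin 0 (left_mem_Icc.2 hY.le)]
  have hquad (y : ℝ) (hy : y ∈ Icc 0 Y) : H Y - H y ≤ Λ * (Y - y) ^ 2 :=
    sub_le_mul_sq_of_hasDerivAt_le_mul_sub hH hΛ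
      (fun η hη => hlin η ⟨hy.1.trans hη.1, hη.2⟩) hy.2
  obtain ⟨κ, hκ, hlog⟩ := exists_mul_log_le_integral_areaDensity hmono hH0 hY hquad
  have hBY : Tendsto B (𝓝[<] (H Y)) (𝓝[<] Y) :=
    hmono.tendsto_rightInverse_nhdsLT hY (by rwa [hH0])
  refine tendsto_atTop_mono' _ ?_ ((tendsto_mul_log_div_sub_nhdsLT hY hκ).comp hBY)
  filter_upwards [Ioo_mem_nhdsLT (hH0 ▸ hmono (left_mem_Icc.2 hY.le) (right_mem_Icc.2 hY.le) hY),
    hBY (Ioo_mem_nhdsLT (half_lt_self hY))] with c hc hBc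
  obtain ⟨hBc', hHB⟩ := hB c hc
  calc κ * log (Y / 2 / (Y - B c)) ≤ ∫ y in 0..B c, areaDensity H (H (B c)) y :=
        hlog (B c) ⟨hBc.1.le, hBc.2⟩ (intervalIntegrable_areaDensity hφ hH hH0 hBc'.1
          (fun y hy => hpos y ⟨hy.1, hy.2.trans_lt hBc'.2⟩) rfl)
    _ = A c := by rw [hHB, hA c hc]

end Primitive

/-- `Ā(ĉ₁) → +∞` and hence `ĉ₁/Ā(ĉ₁) → 0` as `ĉ₁ → ĉ₁,crit⁻`. -/
theorem area_tendsto_atTop_at_critical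
    (u₀ q : ℝ) (hu₀ : 0 < u₀) (hfu₀ : fker u₀ = 0)
    (huniq : ∀ u : ℝ, 0 < u → fker u = 0 → u = u₀)
    (hq : 0 < q)
    (h : ℝ → ℝ) (hh : ∀ y : ℝ, h y = ∫ η in (0:ℝ)..y, fker (q * η))
    (ccrit : ℝ) (hccrit : ccrit = (1 / q) * ∫ u in (0:ℝ)..u₀, fker u)
    (ybar : ℝ → ℝ)
    (hybar : ∀ c1 ∈ Set.Ioo (0:ℝ) ccrit,
      ybar c1 ∈ Set.Ioo 0 (u₀ / q) ∧ h (ybar c1) = c1)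
    (Abar : ℝ → ℝ)
    (hAbar : ∀ c1 ∈ Set.Ioo (0:ℝ) ccrit,
      Abar c1 = ∫ y in (0:ℝ)..(ybar c1), y * h y / Real.sqrt (c1 ^ 2 - (h y) ^ 2)) :
    Tendsto Abar (𝓝[<] ccrit) atTop ∧
    Tendsto (fun c1 : ℝ => c1 / Abar c1) (𝓝[<] ccrit) (𝓝 0) := by
  have hφ : Continuous fun η => fker (q * η) :=
    contDiff_fker.continuous.comp (continuous_const_mul q)
  have hH (y : ℝ) : HasDerivAt h (fker (q * y)) y := by
    rw [funext hh]
    exact (hφ.integral_hasStrictDerivAt 0 y).hasDerivAt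
  have hqu : q * (u₀ / q) = u₀ := mul_div_cancel₀ u₀ hq.ne'
  have hcrit : h (u₀ / q) = ccrit := by
    rw [hh, hccrit, integral_comp_mul_left (fun u => fker u) hq.ne', mul_zero, hqu, one_div,
      smul_eq_mul]
  subst hcrit
  obtain ⟨L, hL⟩ := exists_fker_le_mul_sub hfu₀ hu₀.le
  have hArea : Tendsto Abar (𝓝[<] h (u₀ / q)) atTop :=
    tendsto_integral_areaDensity_atTop (Λ := L * q) hφ hH (by simp [hh]) (div_pos hu₀ hq)
      (fun y hy => fker_pos_of_mem_Ico huniq ⟨by nlinarith [hy.1], by nlinarith [hy.2]⟩)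
      (fun y hy => (hL (q * y) ⟨by nlinarith [hy.1], by nlinarith [hy.2]⟩).trans_eq
        (by rw [mul_assoc, mul_sub q, hqu]))
      hybar hAbar
  exact ⟨hArea, (tendsto_id.mono_left nhdsWithin_le_nhds).div_atTop hArea⟩
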